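/- arXiv:2101.08819 — 3 statements merged into one kernel-verified Lean document; each statement's English description precedes it below -/
import Mathlib

section
/- Suppose every domain accepts at most one value per local sequence number with agreement guaranteed by quorum certificates of size n−f. If two cross-domain requests m ≠ m' are both committed, each requiring quorum certificates from every involved domain, and some domain d is involved in both, then the local sequence numbers assigned by d to m and m' are distinct; consequently the global sequence number vectors of m and m' differ. -/
/-- If every domain (with `3f+1` nodes, at most `f` faulty) accepts at most one request
per local sequence number, with committing requiring a `2f+1` quorum of prepared
messages from every involved domain, then two distinct committed cross-domain requests
sharing an involved domain `d` get distinct local sequence numbers from `d`, hence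
distinct global sequence-number vectors. -/
theorem cross_domain_seq_distinct {α Dom M : Type*} [DecidableEq α]
    (f : ℕ)
    (nodes : Dom → Finset α) (faulty : Dom → Finset α)
    (hsize : ∀ d, (nodes d).card = 3 * f + 1)
    (hfsub : ∀ d, faulty d ⊆ nodes d) (hfcard : ∀ d, (faulty d).card ≤ f)
    (involved : M → Set Dom)
    (hseq : Dom → M → ℕ)  -- local sequence number assigned by domain `d` to request `m`
    (prepared : α → M → ℕ → Prop)
    -- non-faulty nodes assign each local sequence number to at most one request
    (honest : ∀ d, ∀ r ∈ nodes d, r ∉ faulty d →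
      ∀ (m m' : M) (h : ℕ), prepared r m h → prepared r m' h → m = m')
    (m m' : M) (hmm : m ≠ m')
    (d : Dom) (hd : d ∈ involved m) (hd' : d ∈ involved m')
    -- committing `m` requires a quorum certificate from every involved domain
    (hcommit : ∀ d' ∈ involved m, ∃ Q : Finset α, Q ⊆ nodes d' ∧
      2 * f + 1 ≤ Q.card ∧ ∀ r ∈ Q, prepared r m (hseq d' m))
    (hcommit' : ∀ d' ∈ involved m', ∃ Q : Finset α, Q ⊆ nodes d' ∧
      2 * f + 1 ≤ Q.card ∧ ∀ r ∈ Q, prepared r m' (hseq d' m')) :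
    hseq d m ≠ hseq d m' ∧ (fun d' : Dom => hseq d' m) ≠ (fun d' : Dom => hseq d' m') := by
  have key : hseq d m ≠ hseq d m' := by
    intro heq
    obtain ⟨Q, hQsub, hQcard, hQprep⟩ := hcommit d hd
    obtain ⟨Q', hQ'sub, hQ'card, hQ'prep⟩ := hcommit' d hd'
    -- |Q ∩ Q'| ≥ f+1 > |faulty d|
    have hunion : (Q ∪ Q').card ≤ 3 * f + 1 := by
      rw [← hsize d]
      exact Finset.card_le_card (Finset.union_subset hQsub hQ'sub)
    have hinter : f + 1 ≤ (Q ∩ Q').card := by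
      have := Finset.card_union_add_card_inter Q Q'
      omega
    have : ¬ (Q ∩ Q') ⊆ faulty d := by
      intro hsub
      have := Finset.card_le_card hsub
      have := hfcard d
      omega
    obtain ⟨r, hr, hrf⟩ := Finset.not_subset.mp this
    have hrQ : r ∈ Q := (Finset.mem_inter.mp hr).1
    have hrQ' : r ∈ Q' := (Finset.mem_inter.mp hr).2
    exact hmm (honest d r (hQsub hrQ) hrf m m' (hseq d m)
      (hQprep r hrQ) (heq ▸ hQ'prep r hrQ'))
  exact ⟨key, fun h => key (congrFun h d)⟩
end

section
/- Suppose each of two domains d_i and d_j processes cross-domain requests under the rule: upon receiving a prepare for request m, a domain defers m while it has an uncommitted request m' sharing at least two involved domains with m; committing a request requires prepared responses from all involved domains. Then any two committed requests m and m' that share both d_i and d_j are committed in the same order at d_i and d_j. -/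
private lemma cross_domain_aux {Dom M : Type*} [DecidableEq Dom]
    (involved : M → Finset Dom)
    (preparedAt : Dom → M → ℕ)
    (commitAt : Dom → M → ℕ)
    (hcommit : ∀ d m, d ∈ involved m → ∀ d' ∈ involved m, preparedAt d' m < commitAt d m)
    (hblock : ∀ d m m', m ≠ m' → d ∈ involved m → d ∈ involved m' →
      2 ≤ ((involved m) ∩ (involved m')).card →
      ¬ (preparedAt d m' ≤ preparedAt d m ∧ preparedAt d m < commitAt d m'))
    (m m' : M) (hmm : m ≠ m')
    (di dj : Dom) (hij : di ≠ dj)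
    (hdi : di ∈ involved m) (hdi' : di ∈ involved m')
    (hdj : dj ∈ involved m) (hdj' : dj ∈ involved m')
    (hlt : preparedAt di m < preparedAt di m') :
    commitAt di m < commitAt di m' ∧ commitAt dj m < commitAt dj m' := by
  have hcard : 2 ≤ ((involved m) ∩ (involved m')).card := by
    have hsub : ({di, dj} : Finset Dom) ⊆ (involved m) ∩ (involved m') := by
      intro x hx
      simp only [Finset.mem_insert, Finset.mem_singleton] at hx
      rcases hx with rfl | rfl <;> simp [Finset.mem_inter, *]
    calc 2 = ({di, dj} : Finset Dom).card := by rw [Finset.card_insert_of_notMem (by simpa using hij)]; simp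
    _ ≤ _ := Finset.card_le_card hsub
  have hcard' : 2 ≤ ((involved m') ∩ (involved m)).card := by
    rwa [Finset.inter_comm]
  -- one-domain step: prep d m < prep d m' → commit d m ≤ prep d m'
  have step : ∀ d, d ∈ involved m → d ∈ involved m' →
      preparedAt d m < preparedAt d m' → commitAt d m ≤ preparedAt d m' := by
    intro d hd hd' h
    have := hblock d m' m hmm.symm hd' hd hcard'
    push_neg at this
    exact this h.le
  -- commit di m ≤ prep di m' < commit di m'
  have h1 : commitAt di m ≤ preparedAt di m' := step di hdi hdi' hlt
  have h2 : preparedAt di m' < commitAt di m' := hcommit di m' hdi' di hdi'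
  -- prepare order at dj must agree
  have hltj : preparedAt dj m < preparedAt dj m' := by
    by_contra hge
    push_neg at hge
    have := hblock dj m m' hmm hdj hdj' hcard
    push_neg at this
    have h3 : commitAt dj m' ≤ preparedAt dj m := this hge
    have h4 : preparedAt dj m < commitAt di m := hcommit di m hdi dj hdj
    have h5 : preparedAt di m' < commitAt dj m' := hcommit dj m' hdj' di hdi'
    omega
  have h1' : commitAt dj m ≤ preparedAt dj m' := step dj hdj hdj' hltj
  have h2' : preparedAt dj m' < commitAt dj m' := hcommit dj m' hdj' dj hdj'
  exact ⟨lt_of_le_of_lt h1 h2, lt_of_le_of_lt h1' h2'⟩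

/-- Consistency of the coordinator-based cross-domain protocol: under the blocking rule
(a domain defers preparing a request `m` while another request sharing at least two
involved domains is prepared-but-uncommitted at that domain), with commitment requiring
prepared messages from all involved domains, any two committed requests sharing two
domains `dᵢ, dⱼ` are committed in the same order at `dᵢ` and `dⱼ`. -/
theorem cross_domain_commit_order_consistent {Dom M : Type*} [DecidableEq Dom]
    (involved : M → Finset Dom)
    (preparedAt : Dom → M → ℕ)  -- time at which a domain emits prepared for a request
    (commitAt : Dom → M → ℕ)    -- time at which a domain commits a request
    -- a domain commits a request only after every involved domain has emitted prepared
    (hcommit : ∀ d m, d ∈ involved m → ∀ d' ∈ involved m, preparedAt d' m < commitAt d m)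
    -- blocking rule: a domain never prepares `m` in the window in which a conflicting
    -- request `m'` (sharing ≥ 2 involved domains) is prepared-but-uncommitted there
    (hblock : ∀ d m m', m ≠ m' → d ∈ involved m → d ∈ involved m' →
      2 ≤ ((involved m) ∩ (involved m')).card →
      ¬ (preparedAt d m' ≤ preparedAt d m ∧ preparedAt d m < commitAt d m'))
    (m m' : M) (hmm : m ≠ m')
    (di dj : Dom) (hij : di ≠ dj)
    (hdi : di ∈ involved m) (hdi' : di ∈ involved m')
    (hdj : dj ∈ involved m) (hdj' : dj ∈ involved m') :
    commitAt di m < commitAt di m' ↔ commitAt dj m < commitAt dj m' := by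
  rcases lt_trichotomy (preparedAt di m) (preparedAt di m') with h | h | h
  · obtain ⟨a, b⟩ := cross_domain_aux involved preparedAt commitAt hcommit hblock
      m m' hmm di dj hij hdi hdi' hdj hdj' h
    exact iff_of_true a b
  · exfalso
    have hcard : 2 ≤ ((involved m) ∩ (involved m')).card := by
      have hsub : ({di, dj} : Finset Dom) ⊆ (involved m) ∩ (involved m') := by
        intro x hx
        simp only [Finset.mem_insert, Finset.mem_singleton] at hx
        rcases hx with rfl | rfl <;> simp [Finset.mem_inter, *]
      calc 2 = ({di, dj} : Finset Dom).card := by rw [Finset.card_insert_of_notMem (by simpa using hij)]; simp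
      _ ≤ _ := Finset.card_le_card hsub
    exact hblock di m m' hmm hdi hdi' hcard ⟨h.ge, by rw [h]; exact hcommit di m' hdi' di hdi'⟩
  · obtain ⟨a, b⟩ := cross_domain_aux involved preparedAt commitAt hcommit hblock
      m' m hmm.symm di dj hij hdi' hdi hdj' hdj h
    exact iff_of_false (by omega) (by omega)
end

section
/- Consider the mobile-node locking protocol: the local domain maintains lock(n) ∈ {true,false} and remote(n); lock(n) is true iff some remote domain holds transactions for n not yet appended to the local ledger, and remote(n) then identifies that domain. If every history transfer between domains atomically moves the complete recent history and updates lock/remote as specified, then at any time exactly one domain holds the complete up-to-date history of node n. -/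
/-- State of the mobile-node locking protocol for a node `n`: the lock bit and remote
pointer maintained by the homeDom domain, the set of `n`'s transactions recorded at each
domain, and the set of all transactions of `n` issued so far. -/
structure MobileState (Dom Tx : Type) [DecidableEq Tx] [DecidableEq Dom] where
  lock : Bool
  remote : Dom
  recorded : Dom → Finset Tx
  issued : Finset Tx

/-- Transitions of the mobile-node locking protocol. -/
inductive MobileStep {Dom Tx : Type} [DecidableEq Tx] [DecidableEq Dom] (homeDom : Dom) :
    MobileState Dom Tx → MobileState Dom Tx → Prop
  /-- GenerateHistory: the homeDom domain atomically sends the complete history to a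
  remote domain `d'`, sets `lock := true` and `remote := d'`. -/
  | generate (s : MobileState Dom Tx) (d' : Dom) (hd' : d' ≠ homeDom) (h : s.lock = false) :
      MobileStep homeDom s
        { lock := true, remote := d',
          recorded := fun d => if d = d' then s.recorded homeDom else s.recorded d,
          issued := s.issued }
  /-- GetHistory: the remote domain atomically sends all of `n`'s transactions back to
  the homeDom domain, which appends them and sets `lock := false`. -/
  | get (s : MobileState Dom Tx) (h : s.lock = true) :
      MobileStep homeDom s
        { lock := false, remote := s.remote,
          recorded := fun d => if d = homeDom then s.recorded homeDom ∪ s.recorded s.remote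
                               else s.recorded d,
          issued := s.issued }
  /-- A new transaction of `n` is issued; it is recorded only at the domain that
  currently holds the complete history (remote if locked, homeDom otherwise). -/
  | newTx (s : MobileState Dom Tx) (t : Tx) :
      MobileStep homeDom s
        { lock := s.lock, remote := s.remote,
          recorded := fun d =>
            if d = (if s.lock then s.remote else homeDom) then insert t (s.recorded d)
            else s.recorded d,
          issued := insert t s.issued }

/-- At any reachable state, exactly one domain — the homeDom domain when `lock = false`,
and the domain `remote(n)` when `lock = true` — holds the complete up-to-date history
of node `n`. -/
theorem mobile_locking_unique_holder {Dom Tx : Type} [DecidableEq Tx] [DecidableEq Dom]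
    (homeDom : Dom)
    (init : MobileState Dom Tx)
    (hinitLock : init.lock = false)
    (hinitLocal : init.recorded homeDom = init.issued)
    (hinitOthers : ∀ d ≠ homeDom, init.recorded d ⊂ init.issued ∨ init.recorded d = ∅)
    (s : MobileState Dom Tx)
    (hreach : Relation.ReflTransGen (MobileStep homeDom) init s) :
    ∃! d : Dom, d = (if s.lock then s.remote else homeDom) ∧ s.recorded d = s.issued := by
  have key : s.recorded (if s.lock then s.remote else homeDom) = s.issued ∧
      ∀ d, s.recorded d ⊆ s.issued := by
    induction hreach with
    | refl =>
      refine ⟨by simp [hinitLock, hinitLocal], fun d => ?_⟩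
      by_cases hd : d = homeDom
      · simp [hd, hinitLocal]
      · rcases hinitOthers d hd with h | h
        · exact h.subset
        · simp [h]
    | @tail b c _ hstep ih =>
      obtain ⟨ih1, ih2⟩ := ih
      cases hstep with
      | generate d' hd' h =>
        refine ⟨by simp [h] at ih1 ⊢; simpa using ih1, fun d => ?_⟩
        by_cases hdd : d = d' <;> simp [hdd, ih2 _]
      | get h =>
        constructor
        · simp only [h, if_true] at ih1
          simp only [Bool.false_eq_true, if_false, if_pos rfl]
          exact subset_antisymm (Finset.union_subset (ih2 _) ih1.le)
            (ih1 ▸ Finset.subset_union_right)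
        · intro d
          by_cases hdd : d = homeDom <;>
            simp [hdd, Finset.union_subset (ih2 _) (ih2 _), ih2 _]
      | newTx t =>
        refine ⟨by simp [ih1], fun d => ?_⟩
        by_cases hdd : d = (if b.lock then b.remote else homeDom)
        · simp [hdd, Finset.insert_subset_insert _ (ih2 _)]
        · simp only [if_neg hdd]
          exact (ih2 d).trans (Finset.subset_insert _ _)
  exact ⟨_, ⟨rfl, key.1⟩, fun d hd => hd.1⟩
end
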